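/- arXiv:2603.26035 — 2 statements merged into one kernel-verified Lean document; each statement's English description precedes it below -/
import Mathlib

section
/- Let W be the ring of Witt vectors of a perfect field k of characteristic p, let 𝔖 = W[[u]], and let φ : 𝔖 → 𝔖 be the ring endomorphism acting as the Witt vector Frobenius on W and sending u to u^p. If I ⊆ 𝔖 is an ideal satisfying 𝔖·φ(I) ⊇ I, then I = (p^n) for some n ∈ ℕ ∪ {∞} (where (p^∞) means the zero ideal). -/
/-!
For `I ≠ 0`, write `I = p^n J` with `J ⊄ (p)`; this is possible because `𝔖` is a UFD in which `p`
is not a unit. As `φ(p) = p` and `𝔖` is a domain, `J ⊆ 𝔖·φ(J)` as well. Modulo `p`, `φ` becomes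
the Frobenius of `k⟦u⟧`, which sends `(u^m)` into `(u^{pm})`; so the image of `J` in the discrete
valuation ring `k⟦u⟧`, being nonzero and contained in the ideal generated by its Frobenius
image, is everything. Hence `J + (p) = 𝔖`, and `J = 𝔖` because `𝔖` is local.
-/

open PowerSeries

namespace PowerSeries

variable {R S : Type*} [CommRing R] [CommRing S]

theorem C_dvd_iff_forall_dvd_coeff (a : R) (f : R⟦X⟧) : C a ∣ f ↔ ∀ n, a ∣ coeff n f := by
  refine ⟨fun ⟨g, hg⟩ n => ⟨coeff n g, by rw [hg, coeff_C_mul]⟩, fun h => ?_⟩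
  choose g hg using h
  exact ⟨mk g, ext fun n => by rw [coeff_C_mul, coeff_mk, hg]⟩

theorem ker_map_eq_span_C {f : R →+* S} {a : R} (hf : RingHom.ker f = Ideal.span {a}) :
    RingHom.ker (map f) = Ideal.span {C a} := by
  ext g
  rw [RingHom.mem_ker, Ideal.mem_span_singleton, C_dvd_iff_forall_dvd_coeff, PowerSeries.ext_iff]
  refine forall_congr' fun n => ?_
  rw [coeff_map, map_zero, ← RingHom.mem_ker, hf, Ideal.mem_span_singleton]

theorem ringHom_ext_of_X_dvd {f g : R⟦X⟧ →+* S⟦X⟧} (hC : ∀ a, f (C a) = g (C a))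
    (hX : f X = g X) (hX_dvd : X ∣ f X) : f = g := by
  have hpoly : f.comp Polynomial.coeToPowerSeries.ringHom =
      g.comp Polynomial.coeToPowerSeries.ringHom :=
    Polynomial.ringHom_ext (by simpa using hC) (by simpa using hX)
  ext h d
  -- `f` and `g` agree on polynomials, so on `h` up to a multiple of `(f X) ^ (d + 1)`.
  have hdvd : X ^ (d + 1) ∣ f h - g h := by
    obtain ⟨s, hs⟩ : ∃ s, h = X ^ (d + 1) * s + (trunc (d + 1) h : R⟦X⟧) :=
      ⟨_, eq_X_pow_mul_shift_add_trunc (d + 1) h⟩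
    have htrunc := RingHom.congr_fun hpoly (trunc (d + 1) h)
    simp only [RingHom.comp_apply, Polynomial.coeToPowerSeries.ringHom_apply] at htrunc
    rw [hs, map_add, map_add, map_mul, map_mul, map_pow, map_pow, ← hX, htrunc,
      add_sub_add_right_eq_sub, ← mul_sub]
    exact (pow_dvd_pow_of_dvd hX_dvd _).mul_right _
  rw [← sub_eq_zero, ← map_sub]
  exact X_pow_dvd_iff.mp hdvd d d.lt_succ_self

theorem isUnit_C_iff {a : R} : IsUnit (C a) ↔ IsUnit a := by
  rw [isUnit_iff_constantCoeff, constantCoeff_C]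

end PowerSeries

theorem IsLocalRing.eq_top_of_sup_span_eq_top {R : Type*} [CommRing R] [IsLocalRing R]
    {J : Ideal R} {a : R} (ha : ¬IsUnit a) (h : J ⊔ Ideal.span {a} = ⊤) : J = ⊤ := by
  by_contra hJ
  have hle : J ⊔ Ideal.span {a} ≤ IsLocalRing.maximalIdeal R :=
    sup_le (IsLocalRing.le_maximalIdeal hJ) ((Ideal.span_singleton_le_iff_mem _).mpr ha)
  exact (IsLocalRing.maximalIdeal.isMaximal R).ne_top (top_le_iff.mp (h ▸ hle))

theorem IsDiscreteValuationRing.eq_bot_or_eq_top_of_le_map {R : Type*} [CommRing R] [IsDomain R]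
    [IsDiscreteValuationRing R] {ϖ : R} (hϖ : Irreducible ϖ) {σ : R →+* R} (hσ : ϖ ^ 2 ∣ σ ϖ)
    {K : Ideal R} (hK : K ≤ K.map σ) : K = ⊥ ∨ K = ⊤ := by
  refine or_iff_not_imp_left.mpr fun hK0 => ?_
  obtain ⟨m, rfl⟩ := ideal_eq_span_pow_irreducible hK0 hϖ
  rw [Ideal.map_span, Set.image_singleton, map_pow, Ideal.span_le, Set.singleton_subset_iff,
    SetLike.mem_coe, Ideal.mem_span_singleton] at hK
  have h2m : 2 * m ≤ m := by
    rw [← pow_dvd_pow_iff hϖ.ne_zero hϖ.not_isUnit, pow_mul]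
    exact (pow_dvd_pow_of_dvd hσ m).trans hK
  rw [show m = 0 by omega, pow_zero, Ideal.span_singleton_one]

namespace Ideal

variable {R : Type*} [CommRing R]

theorem exists_eq_span_pow_mul_of_finiteMultiplicity {a x : R} {I : Ideal R} (hx : x ∈ I)
    (hfin : FiniteMultiplicity a x) :
    ∃ n, ∃ J : Ideal R, I = span {a ^ n} * J ∧ ¬J ≤ span {a} := by
  classical
  obtain ⟨n, hIn, hIn'⟩ : ∃ n, I ≤ span {a ^ n} ∧ ¬I ≤ span {a ^ (n + 1)} := by
    have hex : ∃ n, ¬I ≤ span {a ^ (n + 1)} := by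
      obtain ⟨N, hN⟩ := hfin
      exact ⟨N, fun hI => hN (mem_span_singleton.mp (hI hx))⟩
    refine ⟨Nat.find hex, ?_, Nat.find_spec hex⟩
    rcases hn : Nat.find hex with _ | m
    · simp
    · exact not_not.mp (Nat.find_min hex (m := m) (by omega))
  have hIJ : I = span {a ^ n} * I.colon (span {a ^ n}) := by
    rw [eq_span_singleton_mul]
    refine ⟨fun z hz => ?_, fun z hz => mul_comm z (a ^ n) ▸ mem_colon_span_singleton.mp hz⟩
    obtain ⟨w, rfl⟩ := mem_span_singleton.mp (hIn hz)
    exact ⟨w, mem_colon_span_singleton.mpr (mul_comm w (a ^ n) ▸ hz), rfl⟩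
  refine ⟨n, _, hIJ, fun hJ => hIn' ?_⟩
  rw [hIJ, pow_succ, ← span_singleton_mul_span_singleton]
  exact mul_mono_right hJ

theorem le_map_of_span_singleton_mul_le_map [IsDomain R] {φ : R →+* R} {a : R} (ha : a ≠ 0)
    (hφa : φ a = a) {J : Ideal R} (h : span {a} * J ≤ (span {a} * J).map φ) :
    J ≤ J.map φ := by
  rwa [Ideal.map_mul, map_span, Set.image_singleton, hφa, span_singleton_mul_right_mono ha] at h

end Ideal

namespace PowerSeries

variable (p : ℕ) [hp : Fact p.Prime] {k : Type*} [CommRing k] [CharP k p]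

variable (k) in
/-- The reduction of `φ` modulo `p`; in characteristic `p` it is just `f ↦ f ^ p`. -/
noncomputable def frobeniusExpand : k⟦X⟧ →+* k⟦X⟧ :=
  (map (frobenius k p)).comp (expand p hp.out.ne_zero).toRingHom

theorem frobeniusExpand_C (a : k) : frobeniusExpand p k (C a) = C (a ^ p) := by
  simp [frobeniusExpand, expand_C, frobenius_def]

theorem frobeniusExpand_X : frobeniusExpand p k X = X ^ p := by
  simp [frobeniusExpand, expand_X]

theorem map_constantCoeff_comp_eq_frobeniusExpand_comp
    {φ : (WittVector p k)⟦X⟧ →+* (WittVector p k)⟦X⟧}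
    (hφC : ∀ a, φ (C a) = C (WittVector.frobenius a)) (hφX : φ X = X ^ p) :
    (map WittVector.constantCoeff).comp φ =
      (frobeniusExpand p k).comp (map WittVector.constantCoeff) := by
  refine ringHom_ext_of_X_dvd (fun a => ?_) ?_ ?_
  · simp [hφC, frobeniusExpand_C, WittVector.coeff_frobenius_charP]
  · simp [hφX, frobeniusExpand_X]
  · simpa [hφX] using dvd_pow_self (X : k⟦X⟧) hp.out.ne_zero

end PowerSeries

namespace WittVector

variable (p : ℕ) [hp : Fact p.Prime] {k : Type*} [Field k] [CharP k p]

theorem not_isUnit_natCast_powerSeries : ¬IsUnit (p : (WittVector p k)⟦X⟧) := by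
  rw [← map_natCast C, isUnit_C_iff]
  exact (irreducible p).not_isUnit

theorem natCast_powerSeries_ne_zero : (p : (WittVector p k)⟦X⟧) ≠ 0 := by
  rw [← map_natCast C, Ne, _root_.map_eq_zero_iff C C_injective]
  exact (irreducible p).ne_zero

variable [PerfectRing k p]

theorem ker_map_constantCoeff :
    RingHom.ker (PowerSeries.map (constantCoeff (p := p) (R := k))) =
      Ideal.span {(p : (WittVector p k)⟦X⟧)} := by
  rw [ker_map_eq_span_C ker_constantCoeff, map_natCast]

theorem eq_top_of_le_map_of_not_le_span_p {φ : (WittVector p k)⟦X⟧ →+* (WittVector p k)⟦X⟧}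
    (hφC : ∀ a, φ (C a) = C (frobenius a)) (hφX : φ X = X ^ p) {J : Ideal (WittVector p k)⟦X⟧}
    (hJ : J ≤ J.map φ) (hJp : ¬J ≤ Ideal.span {(p : (WittVector p k)⟦X⟧)}) : J = ⊤ := by
  set π := PowerSeries.map (constantCoeff (p := p) (R := k))
  have hπJ : J.map π = ⊤ := by
    refine (IsDiscreteValuationRing.eq_bot_or_eq_top_of_le_map X_irreducible
      (σ := frobeniusExpand p k) ?_ ?_).resolve_left ?_
    · rw [frobeniusExpand_X]
      exact pow_dvd_pow X hp.out.two_le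
    · calc J.map π ≤ (J.map φ).map π := Ideal.map_mono hJ
        _ = (J.map π).map (frobeniusExpand p k) := by
          rw [Ideal.map_map, Ideal.map_map,
            map_constantCoeff_comp_eq_frobeniusExpand_comp p hφC hφX]
    · rwa [Ideal.map_eq_bot_iff_le_ker, ker_map_constantCoeff]
  refine IsLocalRing.eq_top_of_sup_span_eq_top (not_isUnit_natCast_powerSeries p) ?_
  rw [← ker_map_constantCoeff, RingHom.ker_eq_comap_bot, ← Ideal.comap_map_of_surjective π
    (PowerSeries.map_surjective _ (constantCoeff_surjective p)), hπJ, Ideal.comap_top]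

end WittVector

/-- Key Lemma. Let `W = W(k)` for a perfect field `k` of characteristic `p`,
`𝔖 = W[[u]]`, and `φ : 𝔖 → 𝔖` the ring endomorphism acting as the Witt vector Frobenius on
coefficients and sending `u ↦ u^p`. If an ideal `I ⊆ 𝔖` satisfies `𝔖·φ(I) ⊇ I`, then
`I = (p^n)` for some `n ∈ ℕ ∪ {∞}` (where `(p^∞) = 0`). -/
theorem stmt0 (p : ℕ) [Fact p.Prime] (k : Type) [Field k] [CharP k p] [PerfectRing k p]
    (φ : PowerSeries (WittVector p k) →+* PowerSeries (WittVector p k))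
    (hφC : ∀ a : WittVector p k, φ (C a) = C (WittVector.frobenius a))
    (hφX : φ (X : PowerSeries (WittVector p k)) = X ^ p)
    (I : Ideal (PowerSeries (WittVector p k)))
    (hI : I ≤ Ideal.span (φ '' (I : Set (PowerSeries (WittVector p k))))) :
    (∃ n : ℕ, I = Ideal.span {(p : PowerSeries (WittVector p k)) ^ n}) ∨ I = ⊥ := by
  rcases eq_or_ne I ⊥ with hI0 | hI0
  · exact Or.inr hI0
  obtain ⟨f, hfI, hf0⟩ := Submodule.exists_mem_ne_zero_of_ne_bot hI0
  obtain ⟨n, J, rfl, hJp⟩ := Ideal.exists_eq_span_pow_mul_of_finiteMultiplicity hfI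
    (FiniteMultiplicity.of_not_isUnit (WittVector.not_isUnit_natCast_powerSeries p) hf0)
  have hJ : J ≤ J.map φ := Ideal.le_map_of_span_singleton_mul_le_map
    (pow_ne_zero n (WittVector.natCast_powerSeries_ne_zero p)) (by rw [map_pow, map_natCast]) hI
  rw [WittVector.eq_top_of_le_map_of_not_le_span_p p hφC hφX hJ hJp, Ideal.mul_top]
  exact Or.inl ⟨n, rfl⟩
end

section
/- Let φ : 𝔖 → 𝔖 (𝔖 = W[[u]]) be Frobenius (Witt Frobenius on W, u ↦ u^p), and ev_N : 𝔖 → W[p^{1/N}] the evaluation u ↦ p^{1/N}. If f(u) = Σ a_i u^i ∈ 𝔖 and the minimum of v_p(a_i) + i/N over i is attained uniquely at i = j with value m + j/N, and jp/N < 1, then the valuation of ev_N(φ(f)) equals m + jp/N, which is strictly greater than m + j/N when j > 0. -/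
open PowerSeries
open scoped Polynomial

/-!
Every class in `W⟦u⟧ ⧸ (u ^ N - p)` is represented by a polynomial in `u` over `W`: `W` is
`p`-adically complete and `u ^ N - p` is distinguished, so Weierstrass division applies. Hence the
valuation is nonnegative on the whole quotient. Writing `φ f = ∑ φ(a_i) u^{ip}` and using that the
Frobenius of `W` preserves `p`-adic valuations, the `j`-th term has valuation `m + jp/N`. For
`i ≠ j` with `p^d ∣ a_i`, integrality of `dN + i > mN + j` together with `jp < N` gives
`dN + ip ≥ mN + jp + 1`, so every other term, and the tail `u^{pD} φ(⋯)` for `D` large, has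
valuation at least `m + (jp + 1)/N`. The ultrametric inequality then gives the value exactly.
-/

theorem Polynomial.isDistinguishedAt_X_pow_sub_C {A : Type*} [CommRing A] {I : Ideal A}
    {a : A} (ha : a ∈ I) {n : ℕ} (hn : n ≠ 0) :
    (Polynomial.X ^ n - Polynomial.C a : A[X]).IsDistinguishedAt I := by
  refine ⟨⟨fun {i} hi => ?_⟩, Polynomial.monic_X_pow_sub_C a hn⟩
  replace hi : i < n := hi.trans_le (by compute_degree)
  rw [Polynomial.coeff_sub, Polynomial.coeff_X_pow, if_neg hi.ne, Polynomial.coeff_C, zero_sub]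
  split_ifs
  · exact I.neg_mem_iff.mpr ha
  · simp

theorem Polynomial.IsDistinguishedAt.surjective_mk_coe {A : Type*} [CommRing A]
    {I : Ideal A} [IsAdicComplete I A] {g : A[X]} (hg : g.IsDistinguishedAt I) :
    Function.Surjective fun r : A[X] =>
      Ideal.Quotient.mk (Ideal.span {(g : A⟦X⟧)}) (r : A⟦X⟧) := by
  intro y
  obtain ⟨z, rfl⟩ := hg.algEquivQuotient.surjective y
  obtain ⟨r, rfl⟩ := Ideal.Quotient.mk_surjective z
  exact ⟨r, by simp⟩

theorem AddValuation.nonneg_eval₂ {A R : Type*} [CommRing A] [CommRing R]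
    (v : AddValuation R (WithTop ℚ)) {G : A →+* R} {s : R} (hG : ∀ a, 0 ≤ v (G a))
    (hs : 0 ≤ v s) (r : A[X]) : 0 ≤ v (r.eval₂ G s) := by
  rw [Polynomial.eval₂_eq_sum_range]
  refine v.map_le_sum fun i _ => ?_
  rw [v.map_mul, v.map_pow]
  exact add_nonneg (hG _) (nsmul_nonneg hs _)

theorem AddValuation.nonneg_of_X_pow_sub_C {A : Type*} [CommRing A] {I : Ideal A}
    [IsAdicComplete I A] {a : A} (ha : a ∈ I) {n : ℕ} (hn : n ≠ 0)
    (v : AddValuation (A⟦X⟧ ⧸ Ideal.span {X ^ n - C a}) (WithTop ℚ))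
    (hC : ∀ b, 0 ≤ v (Ideal.Quotient.mk _ (C b))) (hX : 0 ≤ v (Ideal.Quotient.mk _ X))
    (y : A⟦X⟧ ⧸ Ideal.span {X ^ n - C a}) : 0 ≤ v y := by
  have hcoe : ((Polynomial.X ^ n - Polynomial.C a : A[X]) : A⟦X⟧) = X ^ n - C a := by
    rw [Polynomial.coe_sub, Polynomial.coe_pow, Polynomial.coe_X, Polynomial.coe_C]
  have hsurj : Function.Surjective fun r : A[X] =>
      Ideal.Quotient.mk (Ideal.span {X ^ n - C a}) (r : A⟦X⟧) :=
    hcoe ▸ (Polynomial.isDistinguishedAt_X_pow_sub_C ha hn).surjective_mk_coe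
  obtain ⟨r, rfl⟩ := hsurj y
  dsimp only
  rw [← r.eval₂_C_X_eq_coe, Polynomial.hom_eval₂]
  exact v.nonneg_eval₂ hC hX r

theorem AddValuation.map_eq_of_isolated_coeff {A R : Type*} [CommRing A] [CommRing R]
    (v : AddValuation R (WithTop ℚ)) (ψ : A⟦X⟧ →+* R) (hψ : ∀ g, 0 ≤ v (ψ g))
    {τ : ℚ} (hτ : 0 < τ) (hX : v (ψ X) = τ) (f : A⟦X⟧) {j : ℕ} {μ c : ℚ}
    (hj : v (ψ (C (coeff j f))) = μ) (hc : μ + j * τ < c)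
    (hi : ∀ i ≠ j, (c : WithTop ℚ) ≤ v (ψ (C (coeff i f))) + ((i * τ : ℚ) : WithTop ℚ)) :
    v (ψ f) = ((μ + j * τ : ℚ) : WithTop ℚ) := by
  have hpow : ∀ i : ℕ, v (ψ (X ^ i)) = ((i * τ : ℚ) : WithTop ℚ) := fun i => by
    rw [_root_.map_pow, v.map_pow, hX, ← WithTop.coe_nsmul, nsmul_eq_mul]
  have hterm : ∀ i, v (ψ (C (coeff i f) * X ^ i)) =
      v (ψ (C (coeff i f))) + ((i * τ : ℚ) : WithTop ℚ) := fun i => by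
    rw [_root_.map_mul, v.map_mul, hpow]
  obtain ⟨D, hD⟩ := exists_nat_ge (c / τ)
  have hcD : c ≤ D * τ := (div_le_iff₀ hτ).mp hD
  have hjD : j < D := by
    have hμ : 0 ≤ μ := WithTop.coe_nonneg.mp (hj ▸ hψ _)
    have : (j : ℚ) * τ < D * τ := by linarith
    exact_mod_cast lt_of_mul_lt_mul_right this hτ.le
  set rest := ∑ i ∈ (Finset.range D).erase j, C (coeff i f) * X ^ i +
    X ^ D * PowerSeries.mk fun i => coeff (i + D) f
  have hsplit : f = C (coeff j f) * X ^ j + rest := by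
    conv_lhs => rw [eq_X_pow_mul_shift_add_trunc D f, ← Polynomial.eval₂_C_X_eq_coe,
      eval₂_trunc_eq_sum_range, ← Finset.add_sum_erase _ _ (Finset.mem_range.mpr hjD)]
    ring
  have hrest : (c : WithTop ℚ) ≤ v (ψ rest) := by
    rw [_root_.map_add, map_sum]
    refine v.map_le_add (v.map_le_sum fun i hmem => ?_) ?_
    · exact (hterm i).symm ▸ hi i (Finset.ne_of_mem_erase hmem)
    · rw [_root_.map_mul, v.map_mul, hpow]
      exact le_add_of_le_of_nonneg (WithTop.coe_le_coe.mpr hcD) (hψ _)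
  have hlead : v (ψ (C (coeff j f) * X ^ j)) = ((μ + j * τ : ℚ) : WithTop ℚ) := by
    rw [hterm, hj, WithTop.coe_add]
  rw [hsplit, _root_.map_add,
    v.map_add_eq_of_lt_left (hlead ▸ (WithTop.coe_lt_coe.mpr hc).trans_le hrest), hlead]

theorem natCast_le_of_pow_dvd {A : Type*} [CommRing A] [IsDomain A] [WfDvdMonoid A] {ϖ : A}
    (hϖ : ¬IsUnit ϖ) {val : A → WithTop ℚ}
    (hval : ∀ a (m : ℕ), ϖ ^ m ∣ a ∧ ¬ϖ ^ (m + 1) ∣ a → val a = (m : ℚ))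
    (hval_zero : val 0 = ⊤)
    {a : A} {d : ℕ} (hd : ϖ ^ d ∣ a) : ((d : ℚ) : WithTop ℚ) ≤ val a := by
  rcases eq_or_ne a 0 with rfl | ha
  · simp [hval_zero]
  have hfin : FiniteMultiplicity ϖ a := .of_not_isUnit hϖ ha
  rw [hval a _ ⟨pow_multiplicity_dvd ϖ a,
    hfin.not_pow_dvd_of_multiplicity_lt (Nat.lt_add_one _)⟩]
  exact_mod_cast hfin.le_multiplicity_of_pow_dvd hd

theorem WittVector.pow_p_dvd_frobenius_iff {p : ℕ} [Fact p.Prime] {k : Type*} [CommRing k]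
    [CharP k p] [PerfectRing k p] (a : WittVector p k) (d : ℕ) :
    (p : WittVector p k) ^ d ∣ frobenius a ↔ (p : WittVector p k) ^ d ∣ a := by
  conv_lhs => rw [← map_natCast (frobeniusEquiv p k) p, ← map_pow]
  exact map_dvd_iff (frobeniusEquiv p k)

theorem add_mul_add_one_div_le_of_add_div_lt {N p m j d i : ℕ} (hN : 0 < N) (hp : 1 ≤ p)
    (hjp : (j : ℚ) * p / N < 1) (h : (m : ℚ) + j / N < d + i / N) :
    (m : ℚ) + (j * p + 1) / N ≤ d + i * (p / N) := by
  have hNQ : (0 : ℚ) < N := by exact_mod_cast hN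
  have hjpN : j * p < N := by exact_mod_cast (div_lt_one hNQ).mp hjp
  have hlt : m * N + j < d * N + i := by
    have := (mul_lt_mul_iff_of_pos_right hNQ).mpr h
    field_simp at this
    have : m * N + j < N * d + i := by exact_mod_cast this
    linarith [Nat.mul_comm N d]
  have hle : m * N + j * p + 1 ≤ d * N + i * p := by
    rcases le_or_gt j i with hji | hij
    · nlinarith [Nat.mul_le_mul_right (p - 1) hji, Nat.sub_add_cancel hp]
    · have hmd : m + 1 ≤ d := by
        by_contra! hdm
        nlinarith [Nat.mul_le_mul_right N (Nat.le_of_lt_succ hdm)]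
      nlinarith [Nat.mul_le_mul_right N hmd]
  calc (m : ℚ) + (j * p + 1) / N = ((m * N + j * p + 1 : ℕ) : ℚ) / N := by
        push_cast; field_simp; ring
    _ ≤ ((d * N + i * p : ℕ) : ℚ) / N := by gcongr
    _ = d + i * (p / N) := by push_cast; field_simp

/-- Let `φ : 𝔖 → 𝔖` be the Frobenius (Witt Frobenius on `W`, `u ↦ u^p`), and
`ev_N : 𝔖 → W[p^{1/N}] = 𝔖/(u^N − p)` the evaluation `u ↦ p^{1/N}`, with `v` the `ℚ`-valued
additive valuation as in Statement 13. If `f = Σ a_i u^i ∈ 𝔖`, the minimum of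
`v_p(a_i) + i/N` is attained uniquely at `i = j` with value `m + j/N`, and `jp/N < 1`, then
`v(ev_N(φ f)) = m + jp/N` — which is strictly greater than `m + j/N` when `j > 0`. -/
theorem stmt14 (p : ℕ) [Fact p.Prime] (k : Type) [Field k] [CharP k p] [PerfectRing k p]
    (N : ℕ) (hN : 1 ≤ N)
    (φ : PowerSeries (WittVector p k) →+* PowerSeries (WittVector p k))
    (hφC : ∀ a : WittVector p k, φ (C a) = C (WittVector.frobenius a))
    (hφX : φ (X : PowerSeries (WittVector p k)) = X ^ p)
    (v : AddValuation
      (PowerSeries (WittVector p k) ⧸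
        Ideal.span {(X : PowerSeries (WittVector p k)) ^ N - C (p : WittVector p k)})
      (WithTop ℚ))
    (hvW : ∀ (a : WittVector p k) (m : ℕ),
      ((p : WittVector p k) ^ m ∣ a ∧ ¬ (p : WittVector p k) ^ (m + 1) ∣ a) →
      v (Ideal.Quotient.mk _ (C a)) = ((m : ℚ) : WithTop ℚ))
    (hvX : v (Ideal.Quotient.mk _ (X : PowerSeries (WittVector p k))) =
      ((1 / (N : ℚ) : ℚ) : WithTop ℚ))
    (f : PowerSeries (WittVector p k)) (j m : ℕ)
    -- `v_p(a_j) = m`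
    (hvj : (p : WittVector p k) ^ m ∣ coeff j f ∧
      ¬ (p : WittVector p k) ^ (m + 1) ∣ coeff j f)
    -- the minimum of `v_p(a_i) + i/N` is attained uniquely at `i = j`, with value `m + j/N`
    (huniq : ∀ i : ℕ, i ≠ j → ∃ d : ℕ,
      (m : ℚ) + (j : ℚ) / (N : ℚ) < (d : ℚ) + (i : ℚ) / (N : ℚ) ∧
      (p : WittVector p k) ^ d ∣ coeff i f)
    -- `jp/N < 1`
    (hjp : (j : ℚ) * (p : ℚ) / (N : ℚ) < 1) :
    v (Ideal.Quotient.mk _ (φ f)) =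
      (((m : ℚ) + (j : ℚ) * (p : ℚ) / (N : ℚ) : ℚ) : WithTop ℚ)
    ∧ (0 < j →
        (((m : ℚ) + (j : ℚ) / (N : ℚ) : ℚ) : WithTop ℚ) <
        (((m : ℚ) + (j : ℚ) * (p : ℚ) / (N : ℚ) : ℚ) : WithTop ℚ)) := by
  have hp : 1 < p := (Fact.out : p.Prime).one_lt
  have hvC : ∀ a (d : ℕ), (p : WittVector p k) ^ d ∣ a →
      ((d : ℚ) : WithTop ℚ) ≤ v (Ideal.Quotient.mk _ (C a)) :=
    fun a d => natCast_le_of_pow_dvd (WittVector.irreducible p).not_isUnit hvW (by simp)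
  have hv_nonneg : ∀ y, 0 ≤ v y :=
    v.nonneg_of_X_pow_sub_C (Ideal.mem_span_singleton_self _) (Nat.one_le_iff_ne_zero.mp hN)
      (fun a => by exact_mod_cast hvC a 0 (pow_zero (p : WittVector p k) ▸ one_dvd a))
      (hvX ▸ WithTop.coe_nonneg.mpr (by positivity))
  set ψ := (Ideal.Quotient.mk (Ideal.span {(X : PowerSeries (WittVector p k)) ^ N -
    C (p : WittVector p k)})).comp φ
  have hψC : ∀ a (d : ℕ), (p : WittVector p k) ^ d ∣ a →
      ((d : ℚ) : WithTop ℚ) ≤ v (ψ (C a)) := fun a d hd => by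
    rw [RingHom.comp_apply, hφC]
    exact hvC _ d ((WittVector.pow_p_dvd_frobenius_iff _ d).mpr hd)
  have hψX : v (ψ X) = ((p / N : ℚ) : WithTop ℚ) := by
    rw [RingHom.comp_apply, hφX, map_pow, v.map_pow, hvX, ← WithTop.coe_nsmul, nsmul_eq_mul,
      mul_one_div]
  have hj : v (ψ (C (coeff j f))) = ((m : ℚ) : WithTop ℚ) := by
    rw [RingHom.comp_apply, hφC, hvW _ m]
    simpa only [WittVector.pow_p_dvd_frobenius_iff] using hvj
  refine ⟨?_, fun hj0 => WithTop.coe_lt_coe.mpr ?_⟩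
  · rw [mul_div_assoc]
    refine v.map_eq_of_isolated_coeff ψ (fun g => hv_nonneg _) (by positivity) hψX f hj
      (c := m + (j * p + 1) / N) ?_ fun i hij => ?_
    · rw [← mul_div_assoc]
      gcongr
      exact lt_add_one _
    · obtain ⟨d, hlt, hd⟩ := huniq i hij
      calc ((m + (j * p + 1) / N : ℚ) : WithTop ℚ)
          ≤ ((d + i * (p / N) : ℚ) : WithTop ℚ) := by
            exact_mod_cast add_mul_add_one_div_le_of_add_div_lt hN hp.le hjp hlt
        _ ≤ _ := by
          rw [WithTop.coe_add]
          gcongr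
          exact hψC _ d hd
  · gcongr
    exact lt_mul_of_one_lt_right (by exact_mod_cast hj0) (by exact_mod_cast hp)
end
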